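/- Let A be a Banach algebra with bounded approximate identity (e_i), let X be a neo-unital Banach A ⊗̂ A^{op}-bimodule with action •, equipped with the transferred A ⊗̂ A-bimodule action ∘ given by (a⊗b)∘x = lim_i (a⊗e_i)•x•(e_i⊗b) and x∘(a⊗b) = lim_i (e_i⊗b)•x•(a⊗e_i). If Y is a closed A ⊗̂ A^{op}-submodule of X and f ∈ Y* satisfies u•f = f•u for all u ∈ A ⊗̂ A^{op}, then f also satisfies u∘f = f∘u for all u ∈ A ⊗̂ A, where the dual actions are the canonical ones. -/

import Mathlib

/-! Extend `f` to `F ∈ X*` by Hahn–Banach. As `F` commutes with the `σ`-actions on `Y`, for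
`y ∈ Y` we get `F((a⊗eᵢ)•y•(eᵢ⊗b)) = F(y•(eᵢa ⊗ eᵢb)) → F(y•(a⊗b))`, and likewise for the
other transferred action, so `F((a⊗b)∘y) = F(y∘(a⊗b))`. Density of the elementary tensors in
`A ⊗̂ A` then carries this identity, and the `τ`-invariance of the closed subspace `Y`, to
all of `A ⊗̂ A`. -/

open Filter Topology MulOpposite

/-- A Banach `A`-bimodule structure on the Banach space `X`:
`L a x = a • x` (left action), `R a x = x • a` (right action),
given as continuous bilinear maps. -/
structure BanachBimodule (A X : Type*) [NonUnitalNormedRing A] [NormedSpace ℂ A]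
    [NormedAddCommGroup X] [NormedSpace ℂ X] where
  L : A →L[ℂ] X →L[ℂ] X
  R : A →L[ℂ] X →L[ℂ] X
  L_mul : ∀ a b : A, L (a * b) = (L a).comp (L b)
  R_mul : ∀ a b : A, R (a * b) = (R b).comp (R a)
  LR_comm : ∀ (a b : A) (x : X), R b (L a x) = L a (R b x)

/-- `D : A → X*` is a derivation into the dual Banach bimodule of `X`, written
pointwise: `D(ab) = a·D(b) + D(a)·b` where `(a·f)(x) = f(x·a)`, `(f·a)(x) = f(a·x)`. -/
def IsDualDerivation {A X : Type*} [NonUnitalNormedRing A] [NormedSpace ℂ A]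
    [NormedAddCommGroup X] [NormedSpace ℂ X] (σ : BanachBimodule A X)
    (D : A →L[ℂ] (X →L[ℂ] ℂ)) : Prop :=
  ∀ (a b : A) (x : X), D (a * b) x = D b (σ.R a x) + D a (σ.L b x)

/-- `D` is inner: `D a = a·f − f·a` for some `f ∈ X*`. -/
def IsInnerDualDerivation {A X : Type*} [NonUnitalNormedRing A] [NormedSpace ℂ A]
    [NormedAddCommGroup X] [NormedSpace ℂ X] (σ : BanachBimodule A X)
    (D : A →L[ℂ] (X →L[ℂ] ℂ)) : Prop :=
  ∃ f : X →L[ℂ] ℂ, ∀ (a : A) (x : X), D a x = f (σ.R a x) - f (σ.L a x)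

/-- A Banach algebra is amenable if every continuous derivation into every dual
Banach bimodule is inner. -/
def Amenable (A : Type*) [NonUnitalNormedRing A] [NormedSpace ℂ A] : Prop :=
  ∀ (X : Type) (_ : NormedAddCommGroup X) (_ : NormedSpace ℂ X) (_ : CompleteSpace X)
    (σ : BanachBimodule A X) (D : A →L[ℂ] (X →L[ℂ] ℂ)),
    IsDualDerivation σ D → IsInnerDualDerivation σ D

/-- Weak amenability: every continuous derivation `D : A → A*` into the dual
bimodule (`(a·f)(x) = f(xa)`, `(f·a)(x) = f(ax)`) is inner. -/
def WeaklyAmenable (A : Type*) [NonUnitalNormedRing A] [NormedSpace ℂ A] : Prop :=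
  ∀ D : A →L[ℂ] (A →L[ℂ] ℂ),
    (∀ a b x : A, D (a * b) x = D b (x * a) + D a (b * x)) →
    ∃ f : A →L[ℂ] ℂ, ∀ a x : A, D a x = f (x * a) - f (a * x)

/-- A bounded net in a normed space. -/
structure BddNet (X : Type*) [Norm X] where
  ι : Type
  [dir : SemilatticeSup ι]
  [ne : Nonempty ι]
  z : ι → X
  C : ℝ
  bdd : ∀ i, ‖z i‖ ≤ C

/-- The `atTop` filter of the (directed) index of a bounded net. -/
def BddNet.filter {X : Type*} [Norm X] (S : BddNet X) : Filter S.ι :=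
  letI := S.dir; Filter.atTop

/-- The bounded net `S` is a two-sided bounded approximate identity for `A`. -/
def IsBAI {A : Type*} [NonUnitalNormedRing A] (S : BddNet A) : Prop :=
  ∀ a : A, Tendsto (fun i => a * S.z i) S.filter (nhds a) ∧
           Tendsto (fun i => S.z i * a) S.filter (nhds a)

/-- `A` has a (two-sided) bounded approximate identity. -/
def HasBAI (A : Type*) [NonUnitalNormedRing A] : Prop := ∃ S : BddNet A, IsBAI S

/-- `T`, together with the continuous bilinear map `ι`, is (a realization of) the
projective tensor product `A ⊗̂ B` of the Banach algebras `A` and `B`: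
`ι` is multiplicative ((a⊗b)(c⊗d) = ac⊗bd), satisfies the cross-norm estimate,
has dense linear span, and has the universal (norm-decreasing lifting) property
of the projective tensor norm. -/
structure IsProjTensorProduct (A B T : Type*)
    [NonUnitalNormedRing A] [NormedSpace ℂ A] [NonUnitalNormedRing B] [NormedSpace ℂ B]
    [NonUnitalNormedRing T] [NormedSpace ℂ T] [CompleteSpace T] where
  ι : A →L[ℂ] B →L[ℂ] T
  norm_ι : ∀ a b, ‖ι a b‖ ≤ ‖a‖ * ‖b‖
  ι_mul : ∀ (a c : A) (b d : B), ι a b * ι c d = ι (a * c) (b * d)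
  dense_span : Dense (Submodule.span ℂ (Set.range fun p : A × B => ι p.1 p.2) : Set T)
  lift : ∀ (E : Type) (_ : NormedAddCommGroup E) (_ : NormedSpace ℂ E) (_ : CompleteSpace E)
    (φ : A →L[ℂ] B →L[ℂ] E), ∃ Φ : T →L[ℂ] E, (∀ a b, Φ (ι a b) = φ a b) ∧ ‖Φ‖ ≤ ‖φ‖

instance BddNet.filter_neBot {X : Type*} [Norm X] (S : BddNet X) : S.filter.NeBot :=
  letI := S.dir; letI := S.ne; Filter.atTop_neBot

namespace IsProjTensorProduct

variable {A B T E : Type*} [NonUnitalNormedRing A] [NormedSpace ℂ A] [NonUnitalNormedRing B]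
  [NormedSpace ℂ B] [NonUnitalNormedRing T] [NormedSpace ℂ T] [CompleteSpace T]
  [NormedAddCommGroup E] [NormedSpace ℂ E]

theorem map_mem_of_isClosed (P : IsProjTensorProduct A B T) (φ : T →L[ℂ] E) {Y : Submodule ℂ E}
    (hY : IsClosed (Y : Set E)) (h : ∀ a b, φ (P.ι a b) ∈ Y) (u : T) : φ u ∈ Y := by
  have hspan : (Submodule.span ℂ (Set.range fun p : A × B => P.ι p.1 p.2) : Set T) ⊆
      Y.comap (φ : T →ₗ[ℂ] E) :=
    Submodule.span_le.mpr (by rintro _ ⟨p, rfl⟩; exact h p.1 p.2)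
  exact closure_minimal hspan (hY.preimage φ.continuous) (P.dense_span u)

theorem ext (P : IsProjTensorProduct A B T) {φ ψ : T →L[ℂ] E}
    (h : ∀ a b, φ (P.ι a b) = ψ (P.ι a b)) : φ = ψ :=
  ContinuousLinearMap.ext_on P.dense_span (by rintro _ ⟨p, rfl⟩; exact h p.1 p.2)

end IsProjTensorProduct

namespace BanachBimodule

variable {T X : Type*} [NonUnitalNormedRing T] [NormedSpace ℂ T] [NormedAddCommGroup X]
  [NormedSpace ℂ X] (σ : BanachBimodule T X) {Y : Submodule ℂ X}

theorem R_R (u v : T) (x : X) : σ.R u (σ.R v x) = σ.R (v * u) x := by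
  rw [σ.R_mul]; rfl

variable (hYinv : ∀ (u : T) (y : X), y ∈ Y → σ.L u y ∈ Y ∧ σ.R u y ∈ Y)
include hYinv

theorem mem_of_tendsto_L_R (hY : IsClosed (Y : Set X)) {ι : Type*} {l : Filter ι} [l.NeBot]
    {u v : ι → T} {y x : X} (hy : y ∈ Y)
    (hlim : Tendsto (fun i => σ.L (u i) (σ.R (v i) y)) l (𝓝 x)) : x ∈ Y :=
  hY.mem_of_tendsto hlim (.of_forall fun _ => (hYinv _ _ (hYinv _ _ hy).2).1)

theorem apply_L_R_eq {F : X →L[ℂ] ℂ} (hF : ∀ (u : T) (z : X), z ∈ Y → F (σ.L u z) = F (σ.R u z))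
    {y : X} (hy : y ∈ Y) (u v : T) : F (σ.L u (σ.R v y)) = F (σ.R (v * u) y) := by
  rw [hF u _ (hYinv v y hy).2, σ.R_R]

end BanachBimodule

section Transfer

variable {A T X : Type*} [NonUnitalNormedRing A] [NormedSpace ℂ A] [NonUnitalNormedRing T]
  [NormedSpace ℂ T] [CompleteSpace T] [NormedAddCommGroup X] [NormedSpace ℂ X]
  (P : IsProjTensorProduct A Aᵐᵒᵖ T) {S : BddNet A} (σ : BanachBimodule T X) (F : X →L[ℂ] ℂ)

theorem tendsto_apply_R_ι {a b : A} {c d : S.ι → A} (hc : Tendsto c S.filter (𝓝 a))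
    (hd : Tendsto d S.filter (𝓝 b)) (y : X) :
    Tendsto (fun i => F (σ.R (P.ι (c i) (op (d i))) y)) S.filter
      (𝓝 (F (σ.R (P.ι a (op b)) y))) := by
  have hcont : Continuous fun p : A × A => F (σ.R (P.ι p.1 (op p.2)) y) :=
    F.continuous.comp ((σ.R.flip y).continuous.comp
      (P.ι.continuous₂.comp (continuous_fst.prodMk (continuous_op.comp continuous_snd))))
  simpa only [Function.comp_def] using (hcont.tendsto (a, b)).comp (hc.prodMk_nhds hd)

variable {Y : Submodule ℂ X} (hS : IsBAI S)
  (hYinv : ∀ (u : T) (y : X), y ∈ Y → σ.L u y ∈ Y ∧ σ.R u y ∈ Y)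
  {F} (hF : ∀ (u : T) (z : X), z ∈ Y → F (σ.L u z) = F (σ.R u z))
  {y x : X} (hy : y ∈ Y) (a b : A)
include hS hYinv hF hy

theorem apply_eq_of_tendsto_transferL
    (hlim : Tendsto (fun i => σ.L (P.ι a (op (S.z i))) (σ.R (P.ι (S.z i) (op b)) y))
      S.filter (𝓝 x)) :
    F x = F (σ.R (P.ι a (op b)) y) := by
  have hterm : ∀ i, F (σ.L (P.ι a (op (S.z i))) (σ.R (P.ι (S.z i) (op b)) y)) =
      F (σ.R (P.ι (S.z i * a) (op (S.z i * b))) y) := fun i => by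
    rw [σ.apply_L_R_eq hYinv hF hy, P.ι_mul, op_mul]
  exact tendsto_nhds_unique (((F.continuous.tendsto x).comp hlim).congr hterm)
    (tendsto_apply_R_ι P σ F (hS a).2 (hS b).2 y)

theorem apply_eq_of_tendsto_transferR
    (hlim : Tendsto (fun i => σ.L (P.ι (S.z i) (op b)) (σ.R (P.ι a (op (S.z i))) y))
      S.filter (𝓝 x)) :
    F x = F (σ.R (P.ι a (op b)) y) := by
  have hterm : ∀ i, F (σ.L (P.ι (S.z i) (op b)) (σ.R (P.ι a (op (S.z i))) y)) =
      F (σ.R (P.ι (a * S.z i) (op (b * S.z i))) y) := fun i => by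
    rw [σ.apply_L_R_eq hYinv hF hy, P.ι_mul, op_mul]
  exact tendsto_nhds_unique (((F.continuous.tendsto x).comp hlim).congr hterm)
    (tendsto_apply_R_ι P σ F (hS a).1 (hS b).1 y)

end Transfer

theorem stmt17_general {A T T' X : Type*} [NonUnitalNormedRing A] [NormedSpace ℂ A] [NonUnitalNormedRing T] [NormedSpace ℂ T] [CompleteSpace T] [NonUnitalNormedRing T'] [NormedSpace ℂ T'] [CompleteSpace T']
    [NormedAddCommGroup X] [NormedSpace ℂ X]
    (P : IsProjTensorProduct A Aᵐᵒᵖ T) (Q : IsProjTensorProduct A A T')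
    (S : BddNet A) (hS : IsBAI S)
    (σ : BanachBimodule T X)
    (τ : BanachBimodule T' X)
    (hτ : ∀ (a b : A) (x : X),
      Filter.Tendsto
        (fun i => σ.L (P.ι a (MulOpposite.op (S.z i))) (σ.R (P.ι (S.z i) (MulOpposite.op b)) x))
        S.filter (nhds (τ.L (Q.ι a b) x)) ∧
      Filter.Tendsto
        (fun i => σ.L (P.ι (S.z i) (MulOpposite.op b)) (σ.R (P.ι a (MulOpposite.op (S.z i))) x))
        S.filter (nhds (τ.R (Q.ι a b) x)))
    (Y : Submodule ℂ X) (hYclosed : IsClosed (Y : Set X))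
    (hYinv : ∀ (u : T) (y : X), y ∈ Y → σ.L u y ∈ Y ∧ σ.R u y ∈ Y)
    (f : Y →L[ℂ] ℂ)
    (hf : ∀ (u : T) (y : Y),
      f ⟨σ.R u (y : X), (hYinv u y y.2).2⟩ = f ⟨σ.L u (y : X), (hYinv u y y.2).1⟩) :
    ∀ (u' : T') (y : Y), ∃ (h1 : τ.R u' (y : X) ∈ Y) (h2 : τ.L u' (y : X) ∈ Y),
      f ⟨τ.R u' (y : X), h1⟩ = f ⟨τ.L u' (y : X), h2⟩ := by
  intro u' y
  obtain ⟨F, hFf, -⟩ := exists_extension_norm_eq Y f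
  have hF : ∀ (u : T) (z : X), z ∈ Y → F (σ.L u z) = F (σ.R u z) := fun u z hz =>
    ((hFf ⟨_, _⟩).trans (hf u ⟨z, hz⟩).symm).trans (hFf ⟨_, _⟩).symm
  have hR : τ.R u' y ∈ Y := Q.map_mem_of_isClosed (τ.R.flip y) hYclosed
    (fun a b => σ.mem_of_tendsto_L_R hYinv hYclosed y.2 (hτ a b y).2) u'
  have hL : τ.L u' y ∈ Y := Q.map_mem_of_isClosed (τ.L.flip y) hYclosed
    (fun a b => σ.mem_of_tendsto_L_R hYinv hYclosed y.2 (hτ a b y).1) u'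
  have hFτ : F.comp (τ.R.flip y) = F.comp (τ.L.flip y) := Q.ext fun a b => by
    change F (τ.R (Q.ι a b) y) = F (τ.L (Q.ι a b) y)
    rw [apply_eq_of_tendsto_transferR P σ hS hYinv hF y.2 a b (hτ a b y).2,
      apply_eq_of_tendsto_transferL P σ hS hYinv hF y.2 a b (hτ a b y).1]
  refine ⟨hR, hL, ?_⟩
  rw [← hFf, ← hFf]
  exact DFunLike.congr_fun hFτ u'

/-- let `X` be a neo-unital Banach `A ⊗̂ Aᵒᵖ`-bimodule (`σ`), with the
transferred `A ⊗̂ A`-action `τ` given by the limit formulas along a bounded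
approximate identity `(e_i)`. If `Y ⊆ X` is a closed `σ`-submodule and `f ∈ Y*`
commutes with all `σ`-actions (`u•f = f•u`), then `Y` is `τ`-invariant and `f`
commutes with all `τ`-actions (`u∘f = f∘u`). -/
theorem stmt17 {A T T' X : Type*} [NonUnitalNormedRing A] [NormedSpace ℂ A] [IsScalarTower ℂ A A] [SMulCommClass ℂ A A] [CompleteSpace A] [NonUnitalNormedRing T] [NormedSpace ℂ T] [IsScalarTower ℂ T T] [SMulCommClass ℂ T T] [CompleteSpace T] [NonUnitalNormedRing T'] [NormedSpace ℂ T'] [IsScalarTower ℂ T' T'] [SMulCommClass ℂ T' T'] [CompleteSpace T']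
    [NormedAddCommGroup X] [NormedSpace ℂ X] [CompleteSpace X]
    (P : IsProjTensorProduct A Aᵐᵒᵖ T) (Q : IsProjTensorProduct A A T')
    (S : BddNet A) (hS : IsBAI S)
    (σ : BanachBimodule T X)
    (hneo : ∀ x : X, ∃ (u v : T) (y : X), x = σ.L u (σ.R v y))
    (τ : BanachBimodule T' X)
    (hτ : ∀ (a b : A) (x : X),
      Filter.Tendsto
        (fun i => σ.L (P.ι a (MulOpposite.op (S.z i))) (σ.R (P.ι (S.z i) (MulOpposite.op b)) x))
        S.filter (nhds (τ.L (Q.ι a b) x)) ∧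
      Filter.Tendsto
        (fun i => σ.L (P.ι (S.z i) (MulOpposite.op b)) (σ.R (P.ι a (MulOpposite.op (S.z i))) x))
        S.filter (nhds (τ.R (Q.ι a b) x)))
    (Y : Submodule ℂ X) (hYclosed : IsClosed (Y : Set X))
    (hYinv : ∀ (u : T) (y : X), y ∈ Y → σ.L u y ∈ Y ∧ σ.R u y ∈ Y)
    (f : Y →L[ℂ] ℂ)
    (hf : ∀ (u : T) (y : Y),
      f ⟨σ.R u (y : X), (hYinv u y y.2).2⟩ = f ⟨σ.L u (y : X), (hYinv u y y.2).1⟩) :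
    ∀ (u' : T') (y : Y), ∃ (h1 : τ.R u' (y : X) ∈ Y) (h2 : τ.L u' (y : X) ∈ Y),
      f ⟨τ.R u' (y : X), h1⟩ = f ⟨τ.L u' (y : X), h2⟩ :=
  stmt17_general P Q S hS σ τ hτ Y hYclosed hYinv f hf
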